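/- Let Y = βℕ \ ℕ, X = C_p(Y,{0,1}), and suppose U(A₀,B₀) = ⋃ₙ Xₙ where A₀, B₀ ⊆ Y are finite disjoint and each Xₙ is nowhere dense in X. Then for every n ∈ ℕ and every finite set C ⊆ Y there exist finite disjoint sets A, B ⊆ Y \ C such that U(A,B) ∩ Xₙ = ∅. -/

import Mathlib

/-- The remainder `βℕ \ ℕ`, realized as the subspace of free ultrafilters in `Ultrafilter ℕ`. -/
abbrev OmegaStar : Type := {x : Ultrafilter ℕ // x ∉ Set.range (pure : ℕ → Ultrafilter ℕ)}

/-- `C_p(βℕ \ ℕ, {0,1})`: continuous functions to `{0,1}` (realized as `Bool`) with the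
topology of pointwise convergence. -/
abbrev Cp : Type := {x : OmegaStar → Bool // Continuous x}

/-- The basic open set `U(A,B) = {x : x = 0 on A, x = 1 on B}`. -/
def UAB (A B : Set OmegaStar) : Set Cp :=
  {x : Cp | (∀ t ∈ A, x.1 t = false) ∧ ∀ t ∈ B, x.1 t = true}

lemma UAB_mono {A B A' B' : Set OmegaStar} (hA : A ⊆ A') (hB : B ⊆ B') :
    UAB A' B' ⊆ UAB A B := fun x hx =>
  ⟨fun t ht => hx.1 t (hA ht), fun t ht => hx.2 t (hB ht)⟩

/-- Separating a point from a finite set of distinct ultrafilters by a set of naturals. -/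
lemma sep_point (S : Set OmegaStar) (hS : S.Finite) :
    ∀ t : OmegaStar, t ∉ S → ∃ M : Set ℕ, M ∈ t.1 ∧ ∀ s ∈ S, M ∉ s.1 := by
  induction S, hS using Set.Finite.induction_on with
  | empty => exact fun t _ => ⟨Set.univ, Filter.univ_mem, by simp⟩
  | @insert s S hsS hSfin ih =>
    intro t ht
    obtain ⟨M, hMt, hMS⟩ := ih t (fun h => ht (Set.mem_insert_of_mem _ h))
    have hts : t ≠ s := fun h => ht (h ▸ Set.mem_insert _ _)
    have hts' : t.1 ≠ s.1 := fun h => hts (Subtype.ext h)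
    -- find a set in t.1 not in s.1
    have : ∃ m : Set ℕ, m ∈ t.1 ∧ m ∉ s.1 := by
      by_contra h
      push_neg at h
      apply hts'
      apply Ultrafilter.coe_injective
      apply Filter.ext
      intro m
      constructor
      · intro hm; exact h m hm
      · intro hm
        by_contra hmt
        have : mᶜ ∈ t.1 := Ultrafilter.compl_mem_iff_notMem.mpr hmt
        have : mᶜ ∈ s.1 := h _ this
        exact (Ultrafilter.compl_mem_iff_notMem.mp this) hm
    obtain ⟨m, hmt, hms⟩ := this
    refine ⟨M ∩ m, Filter.inter_mem hMt hmt, ?_⟩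
    rintro s' (rfl | hs')
    · exact fun h => hms (Filter.mem_of_superset h Set.inter_subset_right)
    · exact fun h => hMS s' hs' (Filter.mem_of_superset h Set.inter_subset_left)

/-- A set of naturals belonging to all ultrafilters in `T` and none in `S`. -/
lemma sep_sets (S T : Set OmegaStar) (hS : S.Finite) (hT : T.Finite)
    (hST : ∀ t ∈ T, t ∉ S) :
    ∃ M : Set ℕ, (∀ t ∈ T, M ∈ t.1) ∧ ∀ s ∈ S, M ∉ s.1 := by
  induction T, hT using Set.Finite.induction_on with
  | empty =>
    exact ⟨∅, by simp, fun s _ => Filter.empty_notMem _⟩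
  | @insert t T htT hTfin ih =>
    obtain ⟨M, hMT, hMS⟩ := ih (fun t' ht' => hST t' (Set.mem_insert_of_mem _ ht'))
    obtain ⟨N, hNt, hNS⟩ := sep_point S hS t (hST t (Set.mem_insert _ _))
    refine ⟨M ∪ N, ?_, ?_⟩
    · rintro t' (rfl | ht')
      · exact Filter.mem_of_superset hNt Set.subset_union_right
      · exact Filter.mem_of_superset (hMT t' ht') Set.subset_union_left
    · intro s hs h
      rcases Ultrafilter.union_mem_iff.mp h with h | h
      · exact hMS s hs h
      · exact hNS s hs h

/-- There is a continuous function vanishing on `S` and equal to one on `T`. -/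
lemma exists_mem_UAB (S T : Set OmegaStar) (hS : S.Finite) (hT : T.Finite)
    (hST : ∀ t ∈ T, t ∉ S) : ∃ x : Cp, x ∈ UAB S T := by
  obtain ⟨M, hMT, hMS⟩ := sep_sets S T hS hT hST
  classical
  refine ⟨⟨fun w => decide (M ∈ w.1), ?_⟩, ?_, ?_⟩
  · -- continuity
    have hopen : IsOpen {w : OmegaStar | M ∈ w.1} :=
      (ultrafilter_isOpen_basic M).preimage continuous_subtype_val
    have hopen' : IsOpen {w : OmegaStar | M ∉ w.1} := by
      have : {w : OmegaStar | M ∉ w.1} = Subtype.val ⁻¹' {u : Ultrafilter ℕ | Mᶜ ∈ u} := by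
        ext w
        simp [Ultrafilter.compl_mem_iff_notMem]
      rw [this]
      exact (ultrafilter_isOpen_basic Mᶜ).preimage continuous_subtype_val
    rw [continuous_def]
    intro s _
    by_cases h1 : true ∈ s <;> by_cases h2 : false ∈ s
    · have : (fun w : OmegaStar => decide (M ∈ w.1)) ⁻¹' s = Set.univ := by
        ext w; simp only [Set.mem_preimage, Set.mem_univ, iff_true]
        by_cases h : M ∈ w.1 <;> simp [h, h1, h2]
      rw [this]; exact isOpen_univ
    · have : (fun w : OmegaStar => decide (M ∈ w.1)) ⁻¹' s = {w : OmegaStar | M ∈ w.1} := by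
        ext w; simp only [Set.mem_preimage, Set.mem_setOf_eq]
        by_cases h : M ∈ w.1 <;> simp [h, h1, h2]
      rw [this]; exact hopen
    · have : (fun w : OmegaStar => decide (M ∈ w.1)) ⁻¹' s = {w : OmegaStar | M ∉ w.1} := by
        ext w; simp only [Set.mem_preimage, Set.mem_setOf_eq]
        by_cases h : M ∈ w.1 <;> simp [h, h1, h2]
      rw [this]; exact hopen'
    · have : (fun w : OmegaStar => decide (M ∈ w.1)) ⁻¹' s = ∅ := by
        ext w; simp only [Set.mem_preimage, Set.mem_empty_iff_false, iff_false]
        by_cases h : M ∈ w.1 <;> simp [h, h1, h2]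
      rw [this]; exact isOpen_empty
  · intro s hs
    simp only [decide_eq_false_iff_not]
    exact hMS s hs
  · intro t ht
    simp only [decide_eq_true_eq]
    exact hMT t ht

/-- Key lemma: if `X` is nowhere dense, `X ⊆ U(S,T)` and `C ⊆ S ∪ T`, then there is a basic
set with supports avoiding `C` that is disjoint from `X`. -/
lemma key (S T C : Set OmegaStar) (hS : S.Finite) (hT : T.Finite)
    (hCsub : C ⊆ S ∪ T) (X : Set Cp) (hX : IsNowhereDense X) (hXsub : X ⊆ UAB S T) :
    ∃ A B : Set OmegaStar, A.Finite ∧ B.Finite ∧ Disjoint A B ∧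
      A ⊆ Cᶜ ∧ B ⊆ Cᶜ ∧ UAB A B ∩ X = ∅ := by
  classical
  by_cases hST : ∀ t ∈ T, t ∉ S
  · -- U(S,T) is nonempty open; pick a point outside closure X
    have hUopen_ne : ∃ x : Cp, x ∈ UAB S T ∧ x ∉ closure X := by
      by_contra h
      push_neg at h
      -- then UAB S T ⊆ closure X; UAB S T is open and nonempty
      have hsub : UAB S T ⊆ closure X := fun x hx => h x hx
      have hopen : IsOpen (UAB S T) := by
        have : UAB S T = (⋂ t ∈ S, {x : Cp | x.1 t = false}) ∩
            (⋂ t ∈ T, {x : Cp | x.1 t = true}) := by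
          ext x
          simp [UAB, Set.mem_iInter]
        rw [this]
        apply IsOpen.inter
        · apply hS.isOpen_biInter
          intro t _
          have : {x : Cp | x.1 t = false} = (fun x : Cp => x.1 t) ⁻¹' {false} := rfl
          rw [this]
          exact ((continuous_apply t).comp continuous_subtype_val).isOpen_preimage _
            (isOpen_discrete _)
        · apply hT.isOpen_biInter
          intro t _
          have : {x : Cp | x.1 t = true} = (fun x : Cp => x.1 t) ⁻¹' {true} := rfl
          rw [this]
          exact ((continuous_apply t).comp continuous_subtype_val).isOpen_preimage _
            (isOpen_discrete _)
      obtain ⟨x, hx⟩ := exists_mem_UAB S T hS hT hST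
      have : x ∈ interior (closure X) :=
        interior_maximal hsub hopen hx
      rw [hX] at this
      exact this
    obtain ⟨x, hxU, hxW⟩ := hUopen_ne
    -- (closure X)ᶜ is open in Cp; extract a finite support neighborhood
    have hWopen : IsOpen ((closure X)ᶜ : Set Cp) := isClosed_closure.isOpen_compl
    rw [isOpen_induced_iff] at hWopen
    obtain ⟨V, hVopen, hVeq⟩ := hWopen
    have hxV : x.1 ∈ V := by
      have : x ∈ Subtype.val ⁻¹' V := hVeq ▸ hxW
      exact this
    obtain ⟨I, u, hu, hpi⟩ := isOpen_pi_iff.mp hVopen x.1 hxV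
    set G : Set OmegaStar := ↑I ∪ S ∪ T with hG
    have hGfin : G.Finite := ((I.finite_toSet.union hS).union hT)
    set A' : Set OmegaStar := {t ∈ G | x.1 t = false} with hA'
    set B' : Set OmegaStar := {t ∈ G | x.1 t = true} with hB'
    refine ⟨A' \ C, B' \ C, (hGfin.subset (fun t ht => ht.1)).diff,
      (hGfin.subset (fun t ht => ht.1)).diff, ?_, fun t ht => ht.2, fun t ht => ht.2, ?_⟩
    · rw [Set.disjoint_left]
      rintro t ⟨htA, -⟩ ⟨htB, -⟩
      exact Bool.false_ne_true (htA.2.symm.trans htB.2)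
    · ext y
      simp only [Set.mem_inter_iff, Set.mem_empty_iff_false, iff_false, not_and]
      intro hyAB hyX
      -- show y ∈ UAB A' B'
      have hyU : y ∈ UAB S T := hXsub hyX
      have hyA'B' : y ∈ UAB A' B' := by
        constructor
        · intro t ht
          by_cases htC : t ∈ C
          · rcases hCsub htC with hts | htt
            · exact hyU.1 t hts
            · exact absurd (ht.2.symm.trans (hxU.2 t htt)) Bool.false_ne_true
          · exact hyAB.1 t ⟨ht, htC⟩
        · intro t ht
          by_cases htC : t ∈ C
          · rcases hCsub htC with hts | htt
            · exact absurd ((hxU.1 t hts).symm.trans ht.2) Bool.false_ne_true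
            · exact hyU.2 t htt
          · exact hyAB.2 t ⟨ht, htC⟩
      -- then y.1 ∈ pi I u ⊆ V, so y ∉ closure X
      have hyV : y.1 ∈ V := by
        apply hpi
        intro i hi
        have hiG : i ∈ G := Or.inl (Or.inl hi)
        have hxiu : x.1 i ∈ u i := (hu i hi).2
        cases hxb : x.1 i with
        | false =>
          have : y.1 i = false := hyA'B'.1 i ⟨hiG, hxb⟩
          rw [this, ← hxb]; exact hxiu
        | true =>
          have : y.1 i = true := hyA'B'.2 i ⟨hiG, hxb⟩
          rw [this, ← hxb]; exact hxiu
      have : y ∈ (closure X)ᶜ := by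
        rw [← hVeq]; exact hyV
      exact this (subset_closure hyX)
  · -- S ∩ T ≠ ∅, so UAB S T = ∅ and X = ∅
    push_neg at hST
    obtain ⟨t, htT, htS⟩ := hST
    have hXempty : X = ∅ := by
      ext y
      simp only [Set.mem_empty_iff_false, iff_false]
      intro hy
      have h1 := (hXsub hy).1 t htS
      have h2 := (hXsub hy).2 t htT
      rw [h1] at h2
      exact Bool.false_ne_true h2
    refine ⟨∅, ∅, Set.finite_empty, Set.finite_empty, disjoint_bot_left, ?_, ?_, ?_⟩
    · simp
    · simp
    · rw [hXempty]; simp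

/-- Inductive lemma: allow `C` to exceed `S ∪ T` by a finite set `D` whose points get
handled by case-splitting on the value there. -/
lemma inner (D : Set OmegaStar) (hD : D.Finite) :
    ∀ (S T C : Set OmegaStar), S.Finite → T.Finite →
      C ⊆ S ∪ T ∪ D → ∀ X : Set Cp, IsNowhereDense X → X ⊆ UAB S T →
      ∃ A B : Set OmegaStar, A.Finite ∧ B.Finite ∧ Disjoint A B ∧
        A ⊆ Cᶜ ∧ B ⊆ Cᶜ ∧ UAB A B ∩ X = ∅ := by
  induction D, hD using Set.Finite.induction_on with
  | empty =>
    intro S T C hS hT hC X hX hXsub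
    exact key S T C hS hT (by simpa using hC) X hX hXsub
  | @insert d D hdD hDfin ih =>
    intro S T C hS hT hC X hX hXsub
    -- split on the value at d
    set X₀ : Set Cp := X ∩ {y : Cp | y.1 d = false} with hX₀
    set X₁ : Set Cp := X ∩ {y : Cp | y.1 d = true} with hX₁
    have hX₀nwd : IsNowhereDense X₀ := by
      have : closure X₀ ⊆ closure X := closure_mono Set.inter_subset_left
      have h2 : interior (closure X₀) ⊆ interior (closure X) := interior_mono this
      rw [hX] at h2
      exact Set.subset_eq_empty h2 rfl
    have hX₀sub : X₀ ⊆ UAB (insert d S) T := by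
      rintro y ⟨hyX, hyd⟩
      refine ⟨?_, (hXsub hyX).2⟩
      rintro t (rfl | ht)
      · exact hyd
      · exact (hXsub hyX).1 t ht
    have hC₀ : C ⊆ insert d S ∪ T ∪ D := by
      intro c hc
      rcases hC hc with (hc | hc) | hc
      · exact Or.inl (Or.inl (Set.mem_insert_of_mem _ hc))
      · exact Or.inl (Or.inr hc)
      · rcases hc with rfl | hc
        · exact Or.inl (Or.inl (Set.mem_insert _ _))
        · exact Or.inr hc
    obtain ⟨A₁, B₁, hA₁f, hB₁f, hAB₁d, hA₁C, hB₁C, hAB₁⟩ :=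
      ih (insert d S) T C (hS.insert d) hT hC₀ X₀ hX₀nwd hX₀sub
    -- second stage
    set X' : Set Cp := X₁ ∩ UAB A₁ B₁ with hX'
    have hX'nwd : IsNowhereDense X' := by
      have : closure X' ⊆ closure X := closure_mono (fun y hy => hy.1.1)
      have h2 : interior (closure X') ⊆ interior (closure X) := interior_mono this
      rw [hX] at h2
      exact Set.subset_eq_empty h2 rfl
    have hX'sub : X' ⊆ UAB (S ∪ A₁) (insert d T ∪ B₁) := by
      rintro y ⟨⟨hyX, hyd⟩, hyU⟩
      constructor
      · rintro t (ht | ht)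
        · exact (hXsub hyX).1 t ht
        · exact hyU.1 t ht
      · rintro t ((rfl | ht) | ht)
        · exact hyd
        · exact (hXsub hyX).2 t ht
        · exact hyU.2 t ht
    have hC' : C ∪ A₁ ∪ B₁ ⊆ (S ∪ A₁) ∪ (insert d T ∪ B₁) ∪ D := by
      rintro c ((hc | hc) | hc)
      · rcases hC hc with (h | h) | h
        · exact Or.inl (Or.inl (Or.inl h))
        · exact Or.inl (Or.inr (Or.inl (Set.mem_insert_of_mem _ h)))
        · rcases h with rfl | h
          · exact Or.inl (Or.inr (Or.inl (Set.mem_insert _ _)))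
          · exact Or.inr h
      · exact Or.inl (Or.inl (Or.inr hc))
      · exact Or.inl (Or.inr (Or.inr hc))
    obtain ⟨A₂, B₂, hA₂f, hB₂f, hAB₂d, hA₂C, hB₂C, hAB₂⟩ :=
      ih (S ∪ A₁) (insert d T ∪ B₁) (C ∪ A₁ ∪ B₁) (hS.union hA₁f)
        ((hT.insert d).union hB₁f) hC' X' hX'nwd hX'sub
    refine ⟨A₁ ∪ A₂, B₁ ∪ B₂, hA₁f.union hA₂f, hB₁f.union hB₂f, ?_, ?_, ?_, ?_⟩
    · rw [Set.disjoint_union_left]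
      constructor
      · rw [Set.disjoint_union_right]
        refine ⟨hAB₁d, ?_⟩
        rw [Set.disjoint_left]
        intro t ht htB₂
        exact hB₂C htB₂ (Or.inl (Or.inr ht))
      · rw [Set.disjoint_union_right]
        constructor
        · rw [Set.disjoint_left]
          intro t ht htB₁
          exact hA₂C ht (Or.inr htB₁)
        · exact hAB₂d
    · rintro t (ht | ht)
      · exact hA₁C ht
      · intro htC; exact hA₂C ht (Or.inl (Or.inl htC))
    · rintro t (ht | ht)
      · exact hB₁C ht
      · intro htC; exact hB₂C ht (Or.inl (Or.inl htC))
    · ext y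
      simp only [Set.mem_inter_iff, Set.mem_empty_iff_false, iff_false, not_and]
      intro hyU hyX
      have hyU₁ : y ∈ UAB A₁ B₁ := UAB_mono Set.subset_union_left Set.subset_union_left hyU
      have hyU₂ : y ∈ UAB A₂ B₂ := UAB_mono Set.subset_union_right Set.subset_union_right hyU
      cases hyd : y.1 d with
      | false =>
        have : y ∈ UAB A₁ B₁ ∩ X₀ := ⟨hyU₁, hyX, hyd⟩
        rw [hAB₁] at this
        exact this
      | true =>
        have : y ∈ UAB A₂ B₂ ∩ X' := ⟨hyU₂, ⟨hyX, hyd⟩, hyU₁⟩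
        rw [hAB₂] at this
        exact this

theorem stmt17 (A₀ B₀ : Set OmegaStar) (hA₀ : A₀.Finite) (hB₀ : B₀.Finite)
    (hd : Disjoint A₀ B₀) (Xn : ℕ → Set Cp) (hXn : ∀ n, IsNowhereDense (Xn n))
    (hU : UAB A₀ B₀ = ⋃ n, Xn n) :
    ∀ (n : ℕ) (C : Set OmegaStar), C.Finite →
      ∃ A B : Set OmegaStar, A.Finite ∧ B.Finite ∧ Disjoint A B ∧
        A ⊆ Cᶜ ∧ B ⊆ Cᶜ ∧ UAB A B ∩ Xn n = ∅ := by
  intro n C hC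
  have hsub : Xn n ⊆ UAB A₀ B₀ := by
    rw [hU]
    exact Set.subset_iUnion Xn n
  exact inner C hC A₀ B₀ C hA₀ hB₀ (fun c hc => Or.inr hc) (Xn n) (hXn n) hsub
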